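/- arXiv:1809.05570 — 2 statements merged into one kernel-verified Lean document; each statement's English description precedes it below -/
import Mathlib

section
/- Let Ω ⊆ ℝ be open and φ : Ω → ℝ^{n+1} an n-times differentiable map such that at every s ∈ Ω the vectors φ(s), φ'(s), …, φ⁽ⁿ⁾(s) are linearly independent. Then for every nonzero linear functional ℓ : ℝ^{n+1} → ℝ, the zero set {s ∈ Ω : ℓ(φ(s)) = 0} is discrete in Ω. -/
/-!
Fix `s ∈ Ω`. Since `φ(s), …, φ⁽ⁿ⁾(s)` form a basis, the nonzero functional `ℓ` cannot kill all
of them, so some derivative `(ℓ ∘ φ)⁽ᵏ⁾(s) = ℓ(φ⁽ᵏ⁾(s))` with `k ≤ n` is nonzero. Taking `k`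
minimal, Taylor's theorem with Peano remainder gives `ℓ(φ(t)) ~ c (t - s)ᵏ` with `c ≠ 0`, which
does not vanish for `t ≠ s` close to `s`.
-/

open Filter Topology Asymptotics

theorem LinearIndependent.exists_apply_ne_zero_of_card_eq_finrank {K V W ι : Type*}
    [DivisionRing K] [AddCommGroup V] [Module K V] [FiniteDimensional K V] [AddCommGroup W]
    [Module K W] [Fintype ι] {b : ι → V} (hb : LinearIndependent K b)
    (hcard : Fintype.card ι = Module.finrank K V) {f : V →ₗ[K] W} (hf : f ≠ 0) :
    ∃ i, f (b i) ≠ 0 := by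
  by_contra! h
  exact hf <| LinearMap.ext_on_range (hb.span_eq_top_of_card_eq_finrank' hcard)
    fun i ↦ by simp [h i]

theorem ContinuousLinearMap.iteratedDeriv_comp_left {𝕜 F G : Type*} [NontriviallyNormedField 𝕜]
    [NormedAddCommGroup F] [NormedSpace 𝕜 F] [NormedAddCommGroup G] [NormedSpace 𝕜 G]
    {f : 𝕜 → F} {x : 𝕜} {n : WithTop ℕ∞} (g : F →L[𝕜] G) (hf : ContDiffAt 𝕜 n f x) {i : ℕ}
    (hi : i ≤ n) : iteratedDeriv i (g ∘ f) x = g (iteratedDeriv i f x) := by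
  simp only [iteratedDeriv_eq_iteratedFDeriv, g.iteratedFDeriv_comp_left hf hi,
    ContinuousLinearMap.compContinuousMultilinearMap_coe, Function.comp_apply]

theorem taylorWithinEval_eq_of_iteratedDerivWithin_eq_zero {E : Type*} [NormedAddCommGroup E]
    [NormedSpace ℝ E] {f : ℝ → E} {k : ℕ} {s : Set ℝ} {x₀ : ℝ}
    (hlow : ∀ j < k, iteratedDerivWithin j f s x₀ = 0) (x : ℝ) :
    taylorWithinEval f k s x₀ x =
      ((k.factorial : ℝ)⁻¹ * (x - x₀) ^ k) • iteratedDerivWithin k f s x₀ := by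
  rw [taylor_within_apply, Finset.sum_range_succ, Finset.sum_eq_zero, zero_add]
  intro j hj
  rw [hlow j (Finset.mem_range.mp hj), smul_zero]

theorem ContDiffAt.isEquivalent_pow_of_iteratedDeriv {f : ℝ → ℝ} {x₀ : ℝ} {k : ℕ}
    (hf : ContDiffAt ℝ k f x₀) (hlow : ∀ j < k, iteratedDeriv j f x₀ = 0)
    (hk : iteratedDeriv k f x₀ ≠ 0) :
    f ~[𝓝 x₀] fun x ↦ ((k.factorial : ℝ)⁻¹ * iteratedDeriv k f x₀) * (x - x₀) ^ k := by
  obtain ⟨u, hu, hfu⟩ := hf.contDiffOn le_rfl (by simp)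
  obtain ⟨ε, hε, hball⟩ := Metric.mem_nhds_iff.mp hu
  have hx₀ : x₀ ∈ Metric.ball x₀ ε := Metric.mem_ball_self hε
  have hderiv : ∀ j, iteratedDerivWithin j f (Metric.ball x₀ ε) x₀ = iteratedDeriv j f x₀ :=
    fun j ↦ iteratedDerivWithin_of_isOpen Metric.isOpen_ball hx₀
  have htaylor := taylor_isLittleO (convex_ball x₀ ε) hx₀ (hfu.mono hball)
  rw [nhdsWithin_eq_nhds.mpr (Metric.ball_mem_nhds x₀ hε)] at htaylor
  simp only [taylorWithinEval_eq_of_iteratedDerivWithin_eq_zero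
    (fun j hj ↦ (hderiv j).trans (hlow j hj)), hderiv] at htaylor
  have hc : (k.factorial : ℝ)⁻¹ * iteratedDeriv k f x₀ ≠ 0 := mul_ne_zero (by positivity) hk
  refine IsLittleO.isEquivalent <|
    (htaylor.trans_isBigO (isBigO_self_const_mul hc _ _)).congr_left fun x ↦ ?_
  simp only [Pi.sub_apply, smul_eq_mul]
  ring

theorem ContDiffAt.eventually_ne_zero_of_iteratedDeriv_ne_zero {f : ℝ → ℝ} {x₀ : ℝ} {n k : ℕ}
    (hf : ContDiffAt ℝ n f x₀) (hkn : k ≤ n) (hk : iteratedDeriv k f x₀ ≠ 0) :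
    ∀ᶠ x in 𝓝[≠] x₀, f x ≠ 0 := by
  classical
  have hex : ∃ m, iteratedDeriv m f x₀ ≠ 0 := ⟨k, hk⟩
  have hmk : Nat.find hex ≤ k := Nat.find_min' hex hk
  have hequiv := (hf.of_le (by exact_mod_cast hmk.trans hkn)).isEquivalent_pow_of_iteratedDeriv
    (fun j hj ↦ not_not.mp (Nat.find_min hex hj)) (Nat.find_spec hex)
  filter_upwards [nhdsWithin_le_nhds hequiv.symm.isBigO.eq_zero_imp, self_mem_nhdsWithin]
    with x hzero hne hfx
  exact mul_ne_zero (mul_ne_zero (by positivity) (Nat.find_spec hex))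
    (pow_ne_zero _ (sub_ne_zero.mpr hne)) (hzero hfx)

theorem zero_set_discrete_general (n : ℕ) (Ω : Set ℝ)
    (φ : ℝ → (Fin (n + 1) → ℝ))
    (hdiff : ∀ s ∈ Ω, ContDiffAt ℝ n φ s)
    (hnd : ∀ s ∈ Ω, LinearIndependent ℝ (fun k : Fin (n + 1) => iteratedDeriv (k : ℕ) φ s))
    (ℓ : (Fin (n + 1) → ℝ) →ₗ[ℝ] ℝ) (hℓ : ℓ ≠ 0) :
    ∀ s ∈ Ω, ∃ U ∈ 𝓝 s, ∀ t ∈ U ∩ Ω, t ≠ s → ℓ (φ t) ≠ 0 := by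
  intro s hs
  obtain ⟨i, hi⟩ := (hnd s hs).exists_apply_ne_zero_of_card_eq_finrank (by simp) hℓ
  let g := LinearMap.toContinuousLinearMap ℓ
  have hin : ((i : ℕ) : WithTop ℕ∞) ≤ n := by exact_mod_cast i.is_le
  have hnonzero : ∀ᶠ t in 𝓝[≠] s, g (φ t) ≠ 0 :=
    ((hdiff s hs).continuousLinearMap_comp g).eventually_ne_zero_of_iteratedDeriv_ne_zero i.is_le
      (by rwa [g.iteratedDeriv_comp_left (hdiff s hs) hin])
  exact ⟨_, eventually_nhdsWithin_iff.mp hnonzero, fun t ht hts ↦ ht.1 hts⟩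

/-- If `φ : Ω → ℝ^{n+1}` is `n`-times differentiable with `φ(s), φ'(s), …, φ⁽ⁿ⁾(s)`
linearly independent at every `s ∈ Ω`, then the zero set of `ℓ ∘ φ` is discrete in `Ω`
for every nonzero linear functional `ℓ`. -/
theorem zero_set_discrete (n : ℕ) (Ω : Set ℝ) (hΩ : IsOpen Ω)
    (φ : ℝ → (Fin (n + 1) → ℝ))
    (hdiff : ∀ s ∈ Ω, ContDiffAt ℝ n φ s)
    (hnd : ∀ s ∈ Ω, LinearIndependent ℝ (fun k : Fin (n + 1) => iteratedDeriv (k : ℕ) φ s))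
    (ℓ : (Fin (n + 1) → ℝ) →ₗ[ℝ] ℝ) (hℓ : ℓ ≠ 0) :
    ∀ s ∈ Ω, ∃ U ∈ 𝓝 s, ∀ t ∈ U ∩ Ω, t ≠ s → ℓ (φ t) ≠ 0 :=
  zero_set_discrete_general n Ω φ hdiff hnd ℓ hℓ
end

section
/- (Pyartli's twisting lemma) Let F : Δ → ℒ be C^{n+1} on a neighborhood Δ of 0 in 𝒯, with DF(0) = 0, where 𝒯 ⊕ ℒ = ℝ^{n+1}, dim 𝒯 = d, dim ℒ = n+1−d, and fix φ₀ ∈ ℒ. Define ζ(r) = φ₀ + gγ(r) + F(gγ(r)) where γ(r) = re₁ + ∑_{i=2}^{d} r^{n−d+i}eᵢ and g ∈ SO(d) acts on 𝒯 (with orthonormal basis e₁,…,e_d). If the curve ρ(r) = φ₀ + r·ge₁ + F(r·ge₁) is nondegenerate at 0 in ℒ + ℝ·ge₁ (its derivatives of orders 0,…,n−d+1 at 0 span ℒ + ℝ·ge₁), then ζ is nondegenerate at 0 in ℝ^{n+1}, i.e. ζ(0), ζ'(0), …, ζ⁽ⁿ⁾(0) span ℝ^{n+1}. -/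
/-!
Up to order `n - d + 1` the curve `γ` agrees with the line `r ↦ r • ge₀`, and by Faà di Bruno the
derivatives of `ζ = G ∘ γ` and `ρ = G ∘ (r ↦ r • ge₀)`, `G x = φ₀ + x + F x`, of those orders only
see these jets; so the first `n - d + 2` derivatives of `ζ` span `ℒ + ℝ ge₀`. In order
`n - d + 1 + i` the only contribution of `γ` is `(n - d + 1 + i)! • geᵢ`, and the remaining part
`φ₀ + F ∘ γ` is `ℒ`-valued, so all its derivatives lie in `ℒ`. Hence the span of the derivatives of
`ζ` contains `ℒ` and every `geᵢ`, which span `𝒯` since `g` is orthogonal.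
-/

open Matrix Finset Set

section IteratedDeriv

variable {𝕜 : Type*} [NontriviallyNormedField 𝕜]
  {E : Type*} [NormedAddCommGroup E] [NormedSpace 𝕜 E]
  {F : Type*} [NormedAddCommGroup F] [NormedSpace 𝕜 F]

theorem iteratedDeriv_pow_smul_zero (m k : ℕ) (v : E) :
    iteratedDeriv k (fun r : 𝕜 => r ^ m • v) 0 = if k = m then (m.factorial : 𝕜) • v else 0 := by
  rw [iteratedDeriv_smul_const (by fun_prop), iteratedDeriv_fun_pow_zero]
  split_ifs <;> simp

theorem iteratedDeriv_sum_pow_smul_zero {ι : Type*} [Fintype ι] (m : ι → ℕ) (v : ι → E)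
    (k : ℕ) {i₀ : ι} (hk : ∀ i ≠ i₀, k ≠ m i) :
    iteratedDeriv k (fun r : 𝕜 => ∑ i, r ^ m i • v i) 0
      = iteratedDeriv k (fun r : 𝕜 => r ^ m i₀ • v i₀) 0 := by
  rw [iteratedDeriv_fun_sum fun i _ => by fun_prop]
  refine Finset.sum_eq_single_of_mem i₀ (mem_univ _) fun i _ hi => ?_
  rw [iteratedDeriv_pow_smul_zero, if_neg (hk i hi)]

theorem iteratedDeriv_comp_congr_jet {k : ℕ} {g : E → F} {f₁ f₂ : 𝕜 → E} {x : 𝕜}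
    (hg : ContDiffAt 𝕜 k g (f₁ x)) (hf₁ : ContDiffAt 𝕜 k f₁ x) (hf₂ : ContDiffAt 𝕜 k f₂ x)
    (hjet : ∀ j ≤ k, iteratedDeriv j f₁ x = iteratedDeriv j f₂ x) :
    iteratedDeriv k (g ∘ f₁) x = iteratedDeriv k (g ∘ f₂) x := by
  have h0 : f₁ x = f₂ x := by simpa using hjet 0 (Nat.zero_le k)
  rw [iteratedDeriv_vcomp_eq_sum_orderedFinpartition hg hf₁ le_rfl,
    iteratedDeriv_vcomp_eq_sum_orderedFinpartition (h0 ▸ hg) hf₂ le_rfl, h0]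
  refine Finset.sum_congr rfl fun c _ => ?_
  congr 1
  funext i
  exact hjet _ (c.partSize_le i)

theorem iteratedDeriv_mem_of_forall_mem {L : Submodule 𝕜 E} (hL : IsClosed (L : Set E))
    {f : 𝕜 → E} (hf : ∀ x, f x ∈ L) (k : ℕ) (x : 𝕜) : iteratedDeriv k f x ∈ L := by
  induction k generalizing x with
  | zero => simpa using hf x
  | succ k ih =>
    rw [iteratedDeriv_succ]
    have hspan : Submodule.span 𝕜 (iteratedDeriv k f '' univ) ≤ L :=
      Submodule.span_le.2 (image_subset_iff.2 fun y _ => ih y)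
    exact closure_minimal hspan hL
      (range_deriv_subset_closure_span_image _ dense_univ (mem_range_self x))

theorem iteratedDeriv_sum_pow_smul_zero_of_injective {ι : Type*} [Fintype ι] {m : ι → ℕ}
    (hm : Function.Injective m) (v : ι → E) (j : ι) :
    iteratedDeriv (m j) (fun r : 𝕜 => ∑ i, r ^ m i • v i) 0 = ((m j).factorial : 𝕜) • v j := by
  rw [iteratedDeriv_sum_pow_smul_zero m v _ fun i hi => hm.ne hi.symm, iteratedDeriv_pow_smul_zero,
    if_pos rfl]

theorem iteratedDeriv_add_comp_sub_mem {L : Submodule 𝕜 E} (hL : IsClosed (L : Set E)) {φ₀ : E}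
    (hφ₀ : φ₀ ∈ L) {g : E → E} (hgL : ∀ y, g y ∈ L) {c : 𝕜 → E} {k : ℕ} {x : 𝕜}
    (hc : ContDiffAt 𝕜 k c x) (hg : ContDiffAt 𝕜 k g (c x)) :
    iteratedDeriv k (fun r => φ₀ + c r + g (c r)) x - iteratedDeriv k c x ∈ L := by
  have hsplit : (fun r => φ₀ + c r + g (c r)) = c + fun r => φ₀ + g (c r) := by
    funext r; simp only [Pi.add_apply]; abel
  rw [hsplit, iteratedDeriv_add hc (by fun_prop), add_sub_cancel_left]
  exact iteratedDeriv_mem_of_forall_mem hL (fun r => L.add_mem hφ₀ (hgL _)) k x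

end IteratedDeriv

section Twisting

variable {𝕜 : Type*} [NontriviallyNormedField 𝕜] {E : Type*} [NormedAddCommGroup E]
  [NormedSpace 𝕜 E] {a d : ℕ}

/-- With `a = n - d + 1` and `0`-based indices these are the exponents `1, n - d + 2, …, n` of the
paper's curve `γ`. -/
def twistExponent (a : ℕ) {d : ℕ} (i : Fin d) : ℕ := if (i : ℕ) = 0 then 1 else a + i

def twistCurve (a : ℕ) (v : Fin d → E) : 𝕜 → E := fun r => ∑ i, r ^ twistExponent a i • v i

theorem twistExponent_injective (ha : 0 < a) : Function.Injective (twistExponent a : Fin d → ℕ) :=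
  fun i j hij => by
    simp only [twistExponent] at hij
    split_ifs at hij <;> omega

theorem twistExponent_ne_zero (i : Fin d) : twistExponent a i ≠ 0 := by
  unfold twistExponent; split_ifs <;> omega

theorem twistExponent_lt (ha : 0 < a) (i : Fin d) : twistExponent a i < a + d := by
  unfold twistExponent; split_ifs <;> omega

theorem contDiff_twistCurve (a : ℕ) (v : Fin d → E) {N : WithTop ℕ∞} :
    ContDiff 𝕜 N (twistCurve a v : 𝕜 → E) := by
  unfold twistCurve; fun_prop

theorem twistCurve_zero (a : ℕ) (v : Fin d → E) : twistCurve a v (0 : 𝕜) = 0 := by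
  simp [twistCurve, zero_pow, twistExponent_ne_zero]

theorem iteratedDeriv_comp_twistCurve_of_le {F : Type*} [NormedAddCommGroup F] [NormedSpace 𝕜 F]
    (hd : 0 < d) (v : Fin d → E) {k : ℕ} (hka : k ≤ a) {g : E → F} (hg : ContDiffAt 𝕜 k g 0) :
    iteratedDeriv k (fun r : 𝕜 => g (twistCurve a v r)) 0
      = iteratedDeriv k (fun r : 𝕜 => g (r • v ⟨0, hd⟩)) 0 := by
  have hjet : ∀ j ≤ k, iteratedDeriv j (fun r : 𝕜 => r • v ⟨0, hd⟩) 0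
      = iteratedDeriv j (twistCurve a v : 𝕜 → E) 0 := fun j hj => by
    unfold twistCurve
    rw [iteratedDeriv_sum_pow_smul_zero _ v j (i₀ := ⟨0, hd⟩) fun i hi => ?_]
    · simp [twistExponent]
    have hi : (i : ℕ) ≠ 0 := fun h => hi (Fin.ext h)
    simp only [twistExponent, hi, if_false]; omega
  exact (iteratedDeriv_comp_congr_jet (g := g) (by simpa using hg) (by fun_prop)
    (contDiff_twistCurve a v).contDiffAt hjet).symm

theorem iteratedDeriv_twistCurve_twistExponent (ha : 0 < a) (v : Fin d → E) (i : Fin d) :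
    iteratedDeriv (twistExponent a i) (twistCurve a v : 𝕜 → E) 0
      = ((twistExponent a i).factorial : 𝕜) • v i :=
  iteratedDeriv_sum_pow_smul_zero_of_injective (twistExponent_injective ha) v i

theorem iteratedDeriv_twistCurve_sub_smul_mem (ha : 0 < a) {L : Submodule 𝕜 E}
    (hL : IsClosed (L : Set E)) {φ₀ : E} (hφ₀ : φ₀ ∈ L) {g : E → E} (hgL : ∀ y, g y ∈ L)
    (v : Fin d → E) (i : Fin d) (hg : ContDiffAt 𝕜 (twistExponent a i) g 0) :
    iteratedDeriv (twistExponent a i)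
        (fun r : 𝕜 => φ₀ + twistCurve a v r + g (twistCurve a v r)) 0
      - ((twistExponent a i).factorial : 𝕜) • v i ∈ L := by
  have hmem := iteratedDeriv_add_comp_sub_mem hL hφ₀ hgL (contDiff_twistCurve a v).contDiffAt
    (by rwa [twistCurve_zero] : ContDiffAt 𝕜 (twistExponent a i) g (twistCurve a v (0 : 𝕜)))
  rwa [iteratedDeriv_twistCurve_twistExponent ha] at hmem

end Twisting

section LinearAlgebra

theorem span_range_eq_of_dotProduct_eq_ite {K : Type*} [Field K] {ι : Type*} [Fintype ι]
    {d : ℕ} {T : Submodule K (ι → K)} (hdim : Module.finrank K T = d) {e : Fin d → ι → K}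
    (heT : ∀ i, e i ∈ T) (he : ∀ i j, e i ⬝ᵥ e j = if i = j then 1 else 0) :
    Submodule.span K (range e) = T := by
  have hli : LinearIndependent K e := by
    refine Fintype.linearIndependent_iff.2 fun c hc j => ?_
    simpa [sum_dotProduct, smul_dotProduct, he] using congrArg (· ⬝ᵥ e j) hc
  refine Submodule.eq_of_le_of_finrank_le (Submodule.span_le.2 (range_subset_iff.2 heT)) ?_
  rw [hdim, finrank_span_eq_card hli, Fintype.card_fin]

theorem span_range_le_span_range_sum_smul_of_mul_transpose_eq_one {R M : Type*} [CommRing R]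
    [AddCommGroup M] [Module R M] {ι : Type*} [Fintype ι] [DecidableEq ι] {g : Matrix ι ι R}
    (hg : g * gᵀ = 1) (e : ι → M) :
    Submodule.span R (range e) ≤ Submodule.span R (range fun i => ∑ l, g l i • e l) := by
  refine Submodule.span_le.2 (range_subset_iff.2 fun j => ?_)
  have hrow : ∀ l, ∑ i, g j i * g l i = if j = l then 1 else 0 := fun l => by
    simpa [Matrix.mul_apply, Matrix.one_apply] using congrFun (congrFun hg j) l
  have he : ∑ i, g j i • ∑ l, g l i • e l = e j := by
    simp_rw [Finset.smul_sum, smul_smul]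
    rw [Finset.sum_comm]
    simp_rw [← Finset.sum_smul, hrow, ite_smul, one_smul, zero_smul]
    simp
  rw [← he]
  exact Submodule.sum_mem _ fun i _ => Submodule.smul_mem _ _ (Submodule.subset_span ⟨i, rfl⟩)

end LinearAlgebra

/-- Pyartli's twisting lemma: if the planar section curve `ρ(r) = φ₀ + r·ge₁ + F(r·ge₁)`
is nondegenerate at `0` in `ℒ + ℝ·ge₁`, then the twisted curve
`ζ(r) = φ₀ + gγ(r) + F(gγ(r))`, with `γ(r) = re₁ + ∑_{i=2}^d r^{n-d+i}eᵢ`,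
is nondegenerate at `0` in `ℝ^{n+1}`. -/
theorem pyartli_twisting (d n : ℕ) (hd : 2 ≤ d) (hdn : d ≤ n)
    (T L : Submodule ℝ (Fin (n + 1) → ℝ)) (hTL : IsCompl T L)
    (hdimT : Module.finrank ℝ T = d)
    (e : Fin d → (Fin (n + 1) → ℝ)) (heT : ∀ i, e i ∈ T)
    (hortho : ∀ i j, dotProduct (e i) (e j) = if i = j then 1 else 0)
    (g : Matrix (Fin d) (Fin d) ℝ) (hgo : g * g.transpose = 1)
    (ge : Fin d → (Fin (n + 1) → ℝ)) (hge : ∀ i, ge i = ∑ j, g j i • e j)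
    (φ₀ : Fin (n + 1) → ℝ) (hφ₀ : φ₀ ∈ L)
    (F : (Fin (n + 1) → ℝ) → (Fin (n + 1) → ℝ))
    (hF : ContDiffAt ℝ (n + 1) F 0) (hFL : ∀ x, F x ∈ L)
    (γ ζ ρ : ℝ → (Fin (n + 1) → ℝ))
    (hγ : ∀ r, γ r = ∑ i : Fin d,
      (if (i : ℕ) = 0 then r else r ^ (n - d + (i : ℕ) + 1)) • ge i)
    (hζ : ∀ r, ζ r = φ₀ + γ r + F (γ r))
    (hρ : ∀ r, ρ r = φ₀ + r • ge ⟨0, by omega⟩ + F (r • ge ⟨0, by omega⟩))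
    (hρnd : Submodule.span ℝ
        (Set.range (fun k : Fin (n - d + 2) => iteratedDeriv (k : ℕ) ρ 0))
      = L ⊔ Submodule.span ℝ {ge ⟨0, by omega⟩}) :
    Submodule.span ℝ
      (Set.range (fun k : Fin (n + 1) => iteratedDeriv (k : ℕ) ζ 0)) = ⊤ := by
  set i₀ : Fin d := ⟨0, by omega⟩
  have hγ' : γ = twistCurve (n - d + 1) ge := funext fun r => by
    rw [hγ]; refine Finset.sum_congr rfl fun i _ => ?_
    by_cases hi : (i : ℕ) = 0 <;> simp [twistExponent, hi, add_right_comm]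
  have hFk : ∀ k ≤ n + 1, ContDiffAt ℝ k F 0 := fun k hk => hF.of_le (by exact_mod_cast hk)
  set S := Submodule.span ℝ (Set.range fun k : Fin (n + 1) => iteratedDeriv (k : ℕ) ζ 0)
  have hρS : L ⊔ Submodule.span ℝ {ge i₀} ≤ S := by
    rw [← hρnd, Submodule.span_le]
    rintro _ ⟨k, rfl⟩
    have hζρ : iteratedDeriv k ζ 0 = iteratedDeriv k ρ 0 := by
      rw [funext hζ, funext hρ, hγ']
      exact iteratedDeriv_comp_twistCurve_of_le (g := fun x => φ₀ + x + F x) _ _ (by omega)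
        (by have := hFk k (by omega); fun_prop)
    show iteratedDeriv k ρ 0 ∈ S
    exact hζρ ▸ Submodule.subset_span ⟨⟨k, by omega⟩, rfl⟩
  have hLS : L ≤ S := le_sup_left.trans hρS
  have hgeS : ∀ i, ge i ∈ S := by
    intro i
    by_cases hi : (i : ℕ) = 0
    · obtain rfl : i = i₀ := Fin.ext hi
      exact hρS (Submodule.mem_sup_right (Submodule.mem_span_singleton_self _))
    have hk : twistExponent (n - d + 1) i < n - d + 1 + d := twistExponent_lt (by omega) i
    have hL := iteratedDeriv_twistCurve_sub_smul_mem (by omega) L.closed_of_finiteDimensional hφ₀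
      hFL ge i (hFk (twistExponent (n - d + 1) i) (by omega))
    rw [← hγ', ← funext hζ] at hL
    rw [← S.smul_mem_iff (by positivity : ((twistExponent (n - d + 1) i).factorial : ℝ) ≠ 0)]
    simpa using S.sub_mem (Submodule.subset_span ⟨⟨twistExponent (n - d + 1) i, by omega⟩, rfl⟩)
      (hLS hL)
  have hTS : T ≤ S := by
    rw [← span_range_eq_of_dotProduct_eq_ite hdimT heT hortho]
    refine (span_range_le_span_range_sum_smul_of_mul_transpose_eq_one hgo e).trans ?_
    exact Submodule.span_le.2 (range_subset_iff.2 fun i => hge i ▸ hgeS i)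
  rw [eq_top_iff, ← hTL.sup_eq_top]
  exact sup_le hTS hLS
end
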